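/- Each split metric d^A, for A a nonempty proper subset of {1,...,n}, spans an extreme ray of the metric cone C_n: if d^A = d + d' with d, d' ∈ C_n, then d and d' are nonnegative scalar multiples of d^A. -/
import Mathlib


/-- Index set for coordinates of `ℝ^(n choose 2)`: unordered pairs of distinct
elements of `{1,...,n}`, represented by ordered pairs `(i,j)` with `i < j`. -/
abbrev PairIdx (n : ℕ) := {p : Fin n × Fin n // p.1 < p.2}

/-- The entry `d_{ij}` of a vector `d ∈ ℝ^(n choose 2)` at an arbitrary pair of
distinct indices `i j`. -/
noncomputable def ent {n : ℕ} (d : PairIdx n → ℝ) (i j : Fin n) : ℝ :=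
  if h : i < j then d ⟨(i, j), h⟩ else if h : j < i then d ⟨(j, i), h⟩ else 0

/-- The metric cone `C_n`: nonnegativity and all triangle inequalities. -/
def metricCone (n : ℕ) : Set (PairIdx n → ℝ) :=
  {d | (∀ i j : Fin n, i ≠ j → 0 ≤ ent d i j) ∧
    (∀ i j k : Fin n, i ≠ j → j ≠ k → i ≠ k → ent d i k ≤ ent d i j + ent d j k)}

/-- The split metric `d^A`. -/
def splitMetric {n : ℕ} (A : Finset (Fin n)) : PairIdx n → ℝ :=
  fun p => if (p.1.1 ∈ A ∧ p.1.2 ∉ A) ∨ (p.1.1 ∉ A ∧ p.1.2 ∈ A) then 1 else 0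

lemma ent_symm {n : ℕ} (d : PairIdx n → ℝ) (i j : Fin n) : ent d i j = ent d j i := by
  unfold ent
  rcases lt_trichotomy i j with h | h | h
  · rw [dif_pos h, dif_neg (asymm h), dif_pos h]
  · subst h; simp
  · rw [dif_neg (asymm h), dif_pos h, dif_pos h]

lemma ent_add {n : ℕ} (d d' : PairIdx n → ℝ) (i j : Fin n) :
    ent (d + d') i j = ent d i j + ent d' i j := by
  unfold ent; split_ifs <;> simp

lemma ent_apply {n : ℕ} (d : PairIdx n → ℝ) (i j : Fin n) (h : i < j) :
    ent d i j = d ⟨(i, j), h⟩ := by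
  unfold ent; rw [dif_pos h]

lemma ent_split {n : ℕ} (A : Finset (Fin n)) {i j : Fin n} (hij : i ≠ j) :
    ent (splitMetric A) i j = if (i ∈ A ∧ j ∉ A) ∨ (i ∉ A ∧ j ∈ A) then 1 else 0 := by
  unfold ent splitMetric
  rcases lt_trichotomy i j with h | h | h
  · rw [dif_pos h]
  · exact absurd h hij
  · rw [dif_neg (asymm h), dif_pos h]
    by_cases h1 : i ∈ A <;> by_cases h2 : j ∈ A <;> simp [h1, h2]

/-- Each split metric spans an extreme ray of `C_n`. -/
theorem splitMetric_extremeRay (n : ℕ) (hn : 3 ≤ n) (A : Finset (Fin n))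
    (hA : A.Nonempty) (hA' : A ≠ Finset.univ)
    (d d' : PairIdx n → ℝ) (hd : d ∈ metricCone n) (hd' : d' ∈ metricCone n)
    (hsum : splitMetric A = d + d') :
    ∃ c c' : ℝ, 0 ≤ c ∧ 0 ≤ c' ∧ d = c • splitMetric A ∧ d' = c' • splitMetric A := by
  obtain ⟨i0, hi0⟩ := hA
  obtain ⟨j0, hj0⟩ : ∃ j, j ∉ A := by
    by_contra h; push_neg at h; exact hA' (Finset.eq_univ_iff_forall.2 h)
  have hij0 : i0 ≠ j0 := fun h => hj0 (h ▸ hi0)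
  have hsum' : ∀ i j : Fin n, ent d i j + ent d' i j = ent (splitMetric A) i j := by
    intro i j; rw [hsum, ent_add]
  -- zero on non-cross pairs
  have key0 : ∀ i j : Fin n, i ≠ j → ¬((i ∈ A ∧ j ∉ A) ∨ (i ∉ A ∧ j ∈ A)) →
      ent d i j = 0 ∧ ent d' i j = 0 := by
    intro i j hij hcross
    have h1 := hd.1 i j hij
    have h2 := hd'.1 i j hij
    have h3 := hsum' i j
    rw [ent_split A hij, if_neg hcross] at h3
    constructor <;> linarith
  set c := ent d i0 j0 with hc
  have hc0 : 0 ≤ c := hd.1 i0 j0 hij0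
  have hsum0 := hsum' i0 j0
  rw [ent_split A hij0, if_pos (Or.inl ⟨hi0, hj0⟩)] at hsum0
  have hc1 : c ≤ 1 := by have := hd'.1 i0 j0 hij0; linarith
  -- constancy of ent d on cross pairs
  have hstep1 : ∀ i i' j : Fin n, i ∈ A → i' ∈ A → j ∉ A → ent d i j = ent d i' j := by
    intro i i' j hi hi' hj
    by_cases hii : i = i'
    · rw [hii]
    · have hij : i ≠ j := fun h => hj (h ▸ hi)
      have hi'j : i' ≠ j := fun h => hj (h ▸ hi')
      have hz : ent d i i' = 0 := (key0 i i' hii (by tauto)).1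
      have hz' : ent d i' i = 0 := by rw [ent_symm]; exact hz
      have t1 := hd.2 i i' j hii hi'j hij
      have t2 := hd.2 i' i j (Ne.symm hii) hij hi'j
      linarith
  have hstep2 : ∀ i j j' : Fin n, i ∈ A → j ∉ A → j' ∉ A → ent d i j = ent d i j' := by
    intro i j j' hi hj hj'
    by_cases hjj : j = j'
    · rw [hjj]
    · have hij : i ≠ j := fun h => hj (h ▸ hi)
      have hij' : i ≠ j' := fun h => hj' (h ▸ hi)
      have hz : ent d j j' = 0 := (key0 j j' hjj (by tauto)).1
      have hz' : ent d j' j = 0 := by rw [ent_symm]; exact hz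
      have t1 := hd.2 i j j' hij hjj hij'
      have t2 := hd.2 i j' j hij' (Ne.symm hjj) hij
      linarith
  have hconst : ∀ i j : Fin n, i ∈ A → j ∉ A → ent d i j = c := by
    intro i j hi hj
    rw [hstep1 i i0 j hi hi0 hj, hstep2 i0 j j0 hi0 hj hj0]
  have hdeq : d = c • splitMetric A := by
    funext p
    obtain ⟨⟨i, j⟩, h⟩ := p
    have hij : i ≠ j := ne_of_lt h
    have hdp : d ⟨(i, j), h⟩ = ent d i j := (ent_apply d i j h).symm
    by_cases hcr : (i ∈ A ∧ j ∉ A) ∨ (i ∉ A ∧ j ∈ A)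
    · have hv : ent d i j = c := by
        rcases hcr with ⟨h1, h2⟩ | ⟨h1, h2⟩
        · exact hconst i j h1 h2
        · rw [ent_symm]; exact hconst j i h2 h1
      simp [hdp, hv, splitMetric, hcr]
    · have hv : ent d i j = 0 := (key0 i j hij hcr).1
      simp [hdp, hv, splitMetric, hcr]
  refine ⟨c, 1 - c, hc0, by linarith, hdeq, ?_⟩
  funext p
  have := congrFun hsum p
  rw [Pi.add_apply, hdeq] at this
  simp only [Pi.smul_apply, smul_eq_mul] at this ⊢
  linarith [this]
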